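/- Let N be coprime to b>1 with gcd(N, |b|_N) = 1. Then N has the Midy property for b and every divisor d>1 of |b|_N if and only if |b|_N = |b|_p for every prime p dividing N. -/

import Mathlib

/-- The multiplicative order of `b` modulo `N`. -/
noncomputable def ord (b N : ℕ) : ℕ := orderOf (b : ZMod N)

/-- `N` has the Midy property for base `b` and `d` (where `|b|_N = k·d`):
`ν_p(N) ≤ ν_p(d)` for all primes `p` dividing `gcd(b^k − 1, N)`. -/
def HasMidy (b N d : ℕ) : Prop :=
  ∀ p : ℕ, p.Prime → p ∣ Nat.gcd (b ^ (ord b N / d) - 1) N →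
    padicValNat p N ≤ padicValNat p d

/-!
If `|b|_p = |b|_N` for every prime `p ∣ N`, then for `d > 1` the exponent `k = |b|_N / d` lies
strictly between `0` and `|b|_p`, so no prime factor of `N` divides `b^k − 1` and the Midy
property holds vacuously. Conversely, if `|b|_p` is a proper divisor of `|b|_N`, take
`d = |b|_N / |b|_p > 1`: then `k = |b|_p`, so `p ∣ b^k − 1`, and the Midy property forces
`p ∣ d ∣ |b|_N`, contradicting `gcd(N, |b|_N) = 1`.
-/

lemma ord_dvd_iff_dvd_pow_sub_one {b m k : ℕ} (hb : 0 < b) :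
    ord b m ∣ k ↔ m ∣ b ^ k - 1 := by
  rw [ord, orderOf_dvd_iff_pow_eq_one, ← ZMod.natCast_eq_zero_iff,
    Nat.cast_sub (Nat.one_le_pow _ _ hb), sub_eq_zero, Nat.cast_pow, Nat.cast_one]

lemma ord_pos_of_coprime {b N : ℕ} (hco : Nat.Coprime N b) : 0 < ord b N := by
  rw [ord, ← ZMod.coe_unitOfCoprime b hco.symm, orderOf_units]
  exact orderOf_pos _

lemma ord_dvd_ord_of_dvd {b p N : ℕ} (h : p ∣ N) : ord b p ∣ ord b N := by
  simpa [ord] using orderOf_map_dvd (ZMod.castHom h (ZMod p)).toMonoidHom (b : ZMod N)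

lemma hasMidy_of_forall_ord_eq {b N d : ℕ} (hb : 0 < b) (hord : 0 < ord b N) (hd : 1 < d)
    (hdN : d ∣ ord b N) (H : ∀ p : ℕ, p.Prime → p ∣ N → ord b N = ord b p) :
    HasMidy b N d := by
  intro p hp hpg
  have hpN : p ∣ N := hpg.trans (Nat.gcd_dvd_right _ _)
  have hk_pos : 0 < ord b N / d := Nat.div_pos (Nat.le_of_dvd hord hdN) (by omega)
  have hk_lt : ord b N / d < ord b N := Nat.div_lt_self hord hd
  have hdvd : ord b p ∣ ord b N / d :=
    (ord_dvd_iff_dvd_pow_sub_one hb).mpr (hpg.trans (Nat.gcd_dvd_left _ _))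
  rw [← H p hp hpN] at hdvd
  exact absurd (Nat.le_of_dvd hk_pos hdvd) (by omega)

lemma prime_dvd_of_hasMidy_ord_div {b N p : ℕ} (hb : 0 < b) (hN : 0 < N) (hord : 0 < ord b N)
    (hp : p.Prime) (hpN : p ∣ N) (H : HasMidy b N (ord b N / ord b p)) :
    p ∣ ord b N / ord b p := by
  have : Fact p.Prime := ⟨hp⟩
  have hk : ord b N / (ord b N / ord b p) = ord b p :=
    Nat.div_div_self (ord_dvd_ord_of_dvd hpN) hord.ne'
  have hpk : p ∣ b ^ (ord b N / (ord b N / ord b p)) - 1 := by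
    rw [hk, ← ord_dvd_iff_dvd_pow_sub_one hb]
  refine dvd_of_one_le_padicValNat ((one_le_padicValNat_of_dvd hN.ne' hpN).trans ?_)
  exact H p hp (Nat.dvd_gcd hpk hpN)

theorem stmt6 (b N : ℕ) (hb : 1 < b) (hN : 0 < N) (hco : Nat.Coprime N b)
    (hg : Nat.gcd N (ord b N) = 1) :
    (∀ d : ℕ, 1 < d → d ∣ ord b N → HasMidy b N d) ↔
      (∀ p : ℕ, p.Prime → p ∣ N → ord b N = ord b p) := by
  have hb : 0 < b := by omega
  have hord : 0 < ord b N := ord_pos_of_coprime hco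
  refine ⟨fun H p hp hpN => ?_, fun H d hd hdN => hasMidy_of_forall_ord_eq hb hord hd hdN H⟩
  by_contra hne
  have hp_dvd : ord b p ∣ ord b N := ord_dvd_ord_of_dvd hpN
  have hd : 1 < ord b N / ord b p := Nat.one_lt_div_of_mem_properDivisors
    (Nat.mem_properDivisors.mpr ⟨hp_dvd, (Nat.le_of_dvd hord hp_dvd).lt_of_ne (Ne.symm hne)⟩)
  have hdN : ord b N / ord b p ∣ ord b N := Nat.div_dvd_of_dvd hp_dvd
  have hpd := prime_dvd_of_hasMidy_ord_div hb hN hord hp hpN (H _ hd hdN)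
  exact hp.one_lt.ne' ((Nat.Coprime.coprime_dvd_left hpN hg).eq_one_of_dvd (hpd.trans hdN))
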